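/- Let θ be odd with θ(0) = 0, and let Y_N be as in the duality formula. Then the specialization w_N = z_N satisfies det Y_N(z₁,…,z_N | w₁,…,w_{N-1}, z_N | h) = θ(2z_N)·θ(h+(N-1)/2)·∏_{j=1}^{N-1} θ(z_j - z_N)θ(z_j + z_N)·∏_{j=1}^{N-1} θ(z_N + w_j)θ(z_N - w_j)·det Y_{N-1}(z₁,…,z_{N-1} | w₁,…,w_{N-1} | h + 1/2). -/
import Mathlib


noncomputable def Ymat (θ : ℂ → ℂ) (N : ℕ) (z w : Fin N → ℂ) (h : ℂ) :
    Matrix (Fin N) (Fin N) ℂ := fun j k =>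
  θ (h + ((N : ℂ) - 1) / 2 + w k + z j)
      * (∏ ℓ ∈ Finset.univ.erase j, θ (z ℓ + w k))
      * (∏ ℓ, θ (z ℓ - w k))
  - θ (-h - ((N : ℂ) - 1) / 2 - w k + z j)
      * (∏ ℓ ∈ Finset.univ.erase j, θ (z ℓ - w k))
      * (∏ ℓ, θ (z ℓ + w k))

lemma prod_erase_last {n : ℕ} (f : Fin (n+1) → ℂ) :
    ∏ ℓ ∈ Finset.univ.erase (Fin.last n), f ℓ = ∏ ℓ : Fin n, f ℓ.castSucc := by
  have hset : Finset.univ.erase (Fin.last n)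
      = (Finset.univ : Finset (Fin n)).image Fin.castSucc := by
    rw [Fin.image_castSucc, ← Finset.compl_singleton]
  rw [hset, Finset.prod_image (fun a _ b _ hab => Fin.castSucc_injective n hab)]

lemma erase_castSucc_eq {n : ℕ} (j : Fin n) :
    (Finset.univ : Finset (Fin (n+1))).erase (Fin.castSucc j)
      = insert (Fin.last n) ((Finset.univ.erase j).image Fin.castSucc) := by
  ext x
  simp only [Finset.mem_erase, Finset.mem_univ, and_true, Finset.mem_insert,
    Finset.mem_image]
  constructor
  · intro hx
    rcases Fin.eq_castSucc_or_eq_last x with ⟨y, rfl⟩ | rfl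
    · exact Or.inr ⟨y, by simpa [Fin.castSucc_inj] using hx, rfl⟩
    · exact Or.inl rfl
  · rintro (rfl | ⟨y, hy, rfl⟩)
    · exact fun hc => (Fin.castSucc_lt_last j).ne hc.symm
    · simpa [Fin.castSucc_inj] using hy

lemma prod_erase_castSucc {n : ℕ} (f : Fin (n+1) → ℂ) (j : Fin n) :
    ∏ ℓ ∈ Finset.univ.erase (Fin.castSucc j), f ℓ
      = (∏ ℓ ∈ Finset.univ.erase j, f ℓ.castSucc) * f (Fin.last n) := by
  rw [erase_castSucc_eq, Finset.prod_insert, Finset.prod_image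
    (fun a _ b _ hab => Fin.castSucc_injective n hab), mul_comm]
  simp only [Finset.mem_image, not_exists]
  rintro y ⟨-, hy⟩
  exact (Fin.castSucc_lt_last y).ne hy

theorem detY_recursion_wN_eq_zN (θ : ℂ → ℂ)
    (hodd : ∀ u : ℂ, θ (-u) = -θ u) (h0 : θ 0 = 0)
    (n : ℕ) (z w : Fin (n+1) → ℂ) (h : ℂ)
    (hw : w (Fin.last n) = z (Fin.last n)) :
    (Ymat θ (n+1) z w h).det
      = θ (2 * z (Fin.last n)) * θ (h + ((n : ℂ)) / 2)
        * (∏ j : Fin n, θ (z j.castSucc - z (Fin.last n))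
            * θ (z j.castSucc + z (Fin.last n)))
        * (∏ j : Fin n, θ (z (Fin.last n) + w j.castSucc)
            * θ (z (Fin.last n) - w j.castSucc))
        * (Ymat θ n (z ∘ Fin.castSucc) (w ∘ Fin.castSucc) (h + 1/2)).det := by
  have hzero : ∀ i : Fin (n+1), i ≠ Fin.last n → Ymat θ (n+1) z w h i (Fin.last n) = 0 := by
    intro i hi
    have h1 : (∏ ℓ, θ (z ℓ - w (Fin.last n))) = 0 :=
      Finset.prod_eq_zero (Finset.mem_univ (Fin.last n)) (by rw [hw]; simpa using h0)
    have h2 : (∏ ℓ ∈ Finset.univ.erase i, θ (z ℓ - w (Fin.last n))) = 0 :=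
      Finset.prod_eq_zero
        (Finset.mem_erase.2 ⟨fun hc => hi hc.symm, Finset.mem_univ (Fin.last n)⟩)
        (by rw [hw]; simpa using h0)
    simp [Ymat, h1, h2]
  have hll : Ymat θ (n+1) z w h (Fin.last n) (Fin.last n)
      = θ (h + (n : ℂ) / 2) * (∏ j : Fin n, θ (z j.castSucc - z (Fin.last n)))
        * (θ (2 * z (Fin.last n)) * ∏ j : Fin n, θ (z j.castSucc + z (Fin.last n))) := by
    have h1 : (∏ ℓ, θ (z ℓ - w (Fin.last n))) = 0 :=
      Finset.prod_eq_zero (Finset.mem_univ (Fin.last n)) (by rw [hw]; simpa using h0)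
    have harg : -h - (((n+1 : ℕ) : ℂ) - 1) / 2 - w (Fin.last n) + z (Fin.last n)
        = -(h + (n : ℂ) / 2) := by rw [hw]; push_cast; ring
    have hfull : (∏ ℓ, θ (z ℓ + w (Fin.last n)))
        = (∏ j : Fin n, θ (z j.castSucc + z (Fin.last n))) * θ (2 * z (Fin.last n)) := by
      rw [Fin.prod_univ_castSucc]
      congr 1
      · exact Finset.prod_congr rfl (fun j _ => by rw [hw])
      · rw [hw, two_mul]
    have herase : (∏ j : Fin n, θ (z j.castSucc - w (Fin.last n)))
        = ∏ j : Fin n, θ (z j.castSucc - z (Fin.last n)) :=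
      Finset.prod_congr rfl (fun j _ => by rw [hw])
    simp only [Ymat, h1, mul_zero, zero_sub, harg, hodd, prod_erase_last, hfull]
    rw [herase]
    ring
  have hsub : (Ymat θ (n+1) z w h).submatrix Fin.castSucc Fin.castSucc
      = Matrix.of (fun j k => (θ (z (Fin.last n) + w k.castSucc)
            * θ (z (Fin.last n) - w k.castSucc))
          * Ymat θ n (z ∘ Fin.castSucc) (w ∘ Fin.castSucc) (h + 1/2) j k) := by
    ext j k
    have e1 : h + (((n+1 : ℕ) : ℂ) - 1) / 2 + w k.castSucc + z j.castSucc
        = h + 1/2 + ((n : ℂ) - 1) / 2 + w k.castSucc + z j.castSucc := by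
      push_cast; ring
    have e2 : -h - (((n+1 : ℕ) : ℂ) - 1) / 2 - w k.castSucc + z j.castSucc
        = -(h + 1/2) - ((n : ℂ) - 1) / 2 - w k.castSucc + z j.castSucc := by
      push_cast; ring
    simp only [Matrix.submatrix_apply, Matrix.of_apply, Ymat, Function.comp_apply]
    rw [prod_erase_castSucc, prod_erase_castSucc, Fin.prod_univ_castSucc,
      Fin.prod_univ_castSucc, e1, e2]
    ring
  have hdetsub : ((Ymat θ (n+1) z w h).submatrix Fin.castSucc Fin.castSucc).det
      = (∏ k : Fin n, θ (z (Fin.last n) + w k.castSucc)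
            * θ (z (Fin.last n) - w k.castSucc))
        * (Ymat θ n (z ∘ Fin.castSucc) (w ∘ Fin.castSucc) (h + 1/2)).det := by
    rw [hsub]
    exact Matrix.det_mul_row _ _
  rw [Matrix.det_succ_column (Ymat θ (n+1) z w h) (Fin.last n)]
  rw [Finset.sum_eq_single (Fin.last n) (fun i _ hi => by rw [hzero i hi]; ring)
    (fun hmem => absurd (Finset.mem_univ (Fin.last n)) hmem)]
  rw [Fin.succAbove_last, hdetsub, hll]
  have hsign : ((-1 : ℂ)) ^ (((Fin.last n) : ℕ) + ((Fin.last n) : ℕ)) = 1 :=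
    Even.neg_one_pow ⟨((Fin.last n) : ℕ), rfl⟩
  rw [hsign, Finset.prod_mul_distrib, Finset.prod_mul_distrib]
  ring
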